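/- The R3 switch is an involution on triple configurations, and it restricts to a bijection of the set of matched triple configurations whose three chords all have the same 3-sign onto itself. -/
import Mathlib


/-- The six points `0,…,5`, placed counterclockwise on the circle. -/
abbrev Pt := Fin 6

/-- The arc containing a point: the arcs are `A₀ = {0,1}`, `A₁ = {2,3}`, `A₂ = {4,5}`. -/
def arcOf (x : Pt) : Fin 3 := ⟨x.val / 2, by omega⟩

/-- The first point `2k` of arc `Aₖ`. -/
def p0 (k : Fin 3) : Pt := ⟨2 * k.val, by omega⟩

/-- The second point `2k+1` of arc `Aₖ`. -/
def p1 (k : Fin 3) : Pt := ⟨2 * k.val + 1, by omega⟩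

/-- `m` is a perfect matching of the six points into three chords:
a fixed-point-free involution; `m x` is the other endpoint of the chord at `x`. -/
def IsMatching (m : Pt → Pt) : Prop := (∀ x, m (m x) = x) ∧ (∀ x, m x ≠ x)

/-- Each chord is directed: `h x = true` iff `x` is the head of its chord,
so the two endpoints of any chord consist of one head and one tail. -/
def HeadTail (m : Pt → Pt) (h : Pt → Bool) : Prop := ∀ x, h (m x) = ! h x

/-- The sign `ε ∈ {+1, -1}` (an element of `ℤˣ`) is attached to chords:
both endpoints of a chord carry the same sign. -/
def SignOnChords (m : Pt → Pt) (s : Pt → ℤˣ) : Prop := ∀ x, s (m x) = s x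


instance (m : Pt → Pt) : Decidable (IsMatching m) := by
  unfold IsMatching; infer_instance

instance (m : Pt → Pt) (h : Pt → Bool) : Decidable (HeadTail m h) := by
  unfold HeadTail; infer_instance

instance (m : Pt → Pt) (s : Pt → ℤˣ) : Decidable (SignOnChords m s) := by
  unfold SignOnChords; infer_instance

/-- The chords `{a,b}` and `{c,d}` cross: their endpoint pairs interleave in the
cyclic order `0,1,2,3,4,5`, i.e. exactly one of `c, d` lies strictly between `a` and `b`. -/
def Crosses (a b c d : Pt) : Prop :=
  ((min a b < c ∧ c < max a b) ∧ ¬(min a b < d ∧ d < max a b)) ∨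
    ((min a b < d ∧ d < max a b) ∧ ¬(min a b < c ∧ c < max a b))


instance (a b c d : Pt) : Decidable (Crosses a b c d) := by
  unfold Crosses; infer_instance

/-- The parity of the chord through `x` in the triple: `+1` if it crosses an even
number of the other two chords, `-1` if odd.  The other chords are enumerated by
their representatives `y` with `y < m y`. -/
def parity (m : Pt → Pt) (x : Pt) : ℤˣ :=
  if (Finset.univ.filter
      (fun y : Pt => y < m y ∧ y ≠ x ∧ y ≠ m x ∧ Crosses x (m x) y (m y))).card % 2 = 0
  then 1 else -1

/-- The head endpoint of the chord through `x`. -/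
def headPt (m : Pt → Pt) (h : Pt → Bool) (x : Pt) : Pt := if h x then x else m x

/-- The tail endpoint of the chord through `x`. -/
def tailPt (m : Pt → Pt) (h : Pt → Bool) (x : Pt) : Pt := if h x then m x else x

/-- The direction of the chord through `x`: `+1` (counterclockwise) if, with tail in
arc `Aᵢ` and head in arc `Aⱼ`, we have `j ≡ i + 1 (mod 3)`; `-1` (clockwise) otherwise
(for chords of a matched triple this is exactly the case `j ≡ i - 1 (mod 3)`). -/
def direction (m : Pt → Pt) (h : Pt → Bool) (x : Pt) : ℤˣ :=
  if arcOf (headPt m h x) = arcOf (tailPt m h x) + 1 then 1 else -1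

/-- The 3-sign of the chord through `x`: the product of its sign, parity and direction. -/
def threeSign (m : Pt → Pt) (h : Pt → Bool) (s : Pt → ℤˣ) (x : Pt) : ℤˣ :=
  s x * parity m x * direction m h x

/-- The triple is matched: one arc contains two heads, one arc contains two tails,
and the remaining arc contains one head and one tail belonging to two distinct chords. -/
def Matched (m : Pt → Pt) (h : Pt → Bool) : Prop :=
  ∃ a b c : Fin 3, a ≠ b ∧ a ≠ c ∧ b ≠ c ∧
    h (p0 a) = true ∧ h (p1 a) = true ∧
    h (p0 b) = false ∧ h (p1 b) = false ∧
    h (p0 c) ≠ h (p1 c) ∧ m (p0 c) ≠ p1 c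

instance (m : Pt → Pt) (h : Pt → Bool) : Decidable (Matched m h) := by
  unfold Matched; infer_instance

/-- Swap the two points of each arc `Aₖ = {2k, 2k+1}`. -/
def ptFlip (x : Pt) : Pt := if x.val % 2 = 0 then x + 1 else x - 1

/-- The matching after the R3 switch: endpoints are swapped within each arc. -/
def switchM (m : Pt → Pt) : Pt → Pt := fun x => ptFlip (m (ptFlip x))

/-- The head designations after the R3 switch: each endpoint keeps its
head/tail designation as it moves within its arc. -/
def switchH (h : Pt → Bool) : Pt → Bool := fun x => h (ptFlip x)

/-- The signs after the R3 switch: each chord keeps its sign. -/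
def switchS (s : Pt → ℤˣ) : Pt → ℤˣ := fun x => s (ptFlip x)

/-- The raw data of a signed, directed triple configuration. -/
abbrev ConfigData := (Pt → Pt) × (Pt → Bool) × (Pt → ℤˣ)

/-- The data is an actual triple configuration: a fixed-point-free involutive matching,
one head and one tail per chord, and signs constant on chords. -/
def IsConfig (c : ConfigData) : Prop :=
  IsMatching c.1 ∧ HeadTail c.1 c.2.1 ∧ SignOnChords c.1 c.2.2

/-- The R3 switch of a triple configuration. -/
def r3Switch (c : ConfigData) : ConfigData :=
  (switchM c.1, switchH c.2.1, switchS c.2.2)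

/-- A matched triple configuration whose three chords all have the same 3-sign. -/
def Movable (c : ConfigData) : Prop :=
  IsConfig c ∧ Matched c.1 c.2.1 ∧
    ∀ x y : Pt, threeSign c.1 c.2.1 c.2.2 x = threeSign c.1 c.2.1 c.2.2 y


/-! ### Auxiliary lemmas -/

def matchList : List (Pt → Pt) :=
  [![1, 0, 3, 2, 5, 4],
   ![1, 0, 4, 5, 2, 3],
   ![1, 0, 5, 4, 3, 2],
   ![2, 3, 0, 1, 5, 4],
   ![2, 4, 0, 5, 1, 3],
   ![2, 5, 0, 4, 3, 1],
   ![3, 2, 1, 0, 5, 4],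
   ![3, 4, 5, 0, 1, 2],
   ![3, 5, 4, 0, 2, 1],
   ![4, 2, 1, 5, 0, 3],
   ![4, 3, 5, 1, 0, 2],
   ![4, 5, 3, 2, 0, 1],
   ![5, 2, 1, 4, 3, 0],
   ![5, 3, 4, 1, 2, 0],
   ![5, 4, 3, 2, 1, 0]]

set_option maxHeartbeats 4000000 in
set_option maxRecDepth 4000 in
set_option linter.unusedTactic false in
set_option linter.unreachableTactic false in
lemma matching_mem (m : Pt → Pt) (hm : IsMatching m) : m ∈ matchList := by
  obtain ⟨hinv, hne⟩ := hm
  obtain ⟨a0, h0⟩ : ∃ v, m 0 = v := ⟨_, rfl⟩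
  obtain ⟨a1, h1⟩ : ∃ v, m 1 = v := ⟨_, rfl⟩
  obtain ⟨a2, h2⟩ : ∃ v, m 2 = v := ⟨_, rfl⟩
  obtain ⟨a3, h3⟩ : ∃ v, m 3 = v := ⟨_, rfl⟩
  obtain ⟨a4, h4⟩ : ∃ v, m 4 = v := ⟨_, rfl⟩
  obtain ⟨a5, h5⟩ : ∃ v, m 5 = v := ⟨_, rfl⟩
  have k0 := hinv 0; have k1 := hinv 1; have k2 := hinv 2
  have k3 := hinv 3; have k4 := hinv 4; have k5 := hinv 5
  have n0 := hne 0; have n1 := hne 1; have n2 := hne 2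
  have n3 := hne 3; have n4 := hne 4; have n5 := hne 5
  rw [h0] at k0 n0; rw [h1] at k1 n1; rw [h2] at k2 n2
  rw [h3] at k3 n3; rw [h4] at k4 n4; rw [h5] at k5 n5
  have e : m = ![a0,a1,a2,a3,a4,a5] := by
    funext x; fin_cases x <;> assumption
  subst e
  clear hinv hne
  fin_cases a0 <;> fin_cases a1 <;> simp_all <;>
    (try fin_cases a2) <;> simp_all <;>
    (try fin_cases a3) <;> simp_all <;>
    (try fin_cases a4) <;> simp_all <;>
    (try fin_cases a5) <;>
    first
      | decide
      | (simp_all; decide)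
      | (exact absurd h5 (by decide))
      | (exact absurd h4 (by decide))
      | (exact absurd h3 (by decide))
      | (exact absurd h2 (by decide))
      | (exact absurd k5 (by decide))
      | (exact absurd k4 (by decide))

/-- The core finite check: for every matching and head assignment of a matched triple,
the switch stays matched and `parity * direction` is invariant chordwise. -/
def KeyProp (m : Pt → Pt) : Prop :=
  ∀ h : Pt → Bool, HeadTail m h → Matched m h →
    Matched (switchM m) (switchH h) ∧
    ∀ x : Pt, parity (switchM m) (ptFlip x) *
        direction (switchM m) (switchH h) (ptFlip x)
      = parity m x * direction m h x

instance (m : Pt → Pt) : Decidable (KeyProp m) := by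
  unfold KeyProp; infer_instance

set_option maxHeartbeats 1000000 in
lemma key1 : KeyProp ![1, 0, 3, 2, 5, 4] := by decide

set_option maxHeartbeats 1000000 in
lemma key2 : KeyProp ![1, 0, 4, 5, 2, 3] := by decide

set_option maxHeartbeats 1000000 in
lemma key3 : KeyProp ![1, 0, 5, 4, 3, 2] := by decide

set_option maxHeartbeats 1000000 in
lemma key4 : KeyProp ![2, 3, 0, 1, 5, 4] := by decide

set_option maxHeartbeats 1000000 in
lemma key5 : KeyProp ![2, 4, 0, 5, 1, 3] := by decide

set_option maxHeartbeats 1000000 in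
lemma key6 : KeyProp ![2, 5, 0, 4, 3, 1] := by decide

set_option maxHeartbeats 1000000 in
lemma key7 : KeyProp ![3, 2, 1, 0, 5, 4] := by decide

set_option maxHeartbeats 1000000 in
lemma key8 : KeyProp ![3, 4, 5, 0, 1, 2] := by decide

set_option maxHeartbeats 1000000 in
lemma key9 : KeyProp ![3, 5, 4, 0, 2, 1] := by decide

set_option maxHeartbeats 1000000 in
lemma key10 : KeyProp ![4, 2, 1, 5, 0, 3] := by decide

set_option maxHeartbeats 1000000 in
lemma key11 : KeyProp ![4, 3, 5, 1, 0, 2] := by decide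

set_option maxHeartbeats 1000000 in
lemma key12 : KeyProp ![4, 5, 3, 2, 0, 1] := by decide

set_option maxHeartbeats 1000000 in
lemma key13 : KeyProp ![5, 2, 1, 4, 3, 0] := by decide

set_option maxHeartbeats 1000000 in
lemma key14 : KeyProp ![5, 3, 4, 1, 2, 0] := by decide

set_option maxHeartbeats 1000000 in
lemma key15 : KeyProp ![5, 4, 3, 2, 1, 0] := by decide

lemma key (m : Pt → Pt) (hm : IsMatching m) : KeyProp m := by
  have hmem := matching_mem m hm
  simp only [matchList, List.mem_cons, List.not_mem_nil, or_false] at hmem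
  rcases hmem with rfl|rfl|rfl|rfl|rfl|rfl|rfl|rfl|rfl|rfl|rfl|rfl|rfl|rfl|rfl <;>
    first
      | exact key1
      | exact key2
      | exact key3
      | exact key4
      | exact key5
      | exact key6
      | exact key7
      | exact key8
      | exact key9
      | exact key10
      | exact key11
      | exact key12
      | exact key13
      | exact key14
      | exact key15

lemma ptFlip_flip : ∀ x : Pt, ptFlip (ptFlip x) = x := by decide

lemma switchM_invol (m : Pt → Pt) : switchM (switchM m) = m := by
  funext x; simp [switchM, ptFlip_flip]

lemma switchH_invol (h : Pt → Bool) : switchH (switchH h) = h := by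
  funext x; simp [switchH, ptFlip_flip]

lemma switchS_invol (s : Pt → ℤˣ) : switchS (switchS s) = s := by
  funext x; simp [switchS, ptFlip_flip]

lemma r3Switch_invol (c : ConfigData) : r3Switch (r3Switch c) = c := by
  obtain ⟨m, h, s⟩ := c
  simp [r3Switch, switchM_invol, switchH_invol, switchS_invol]

lemma isConfig_switch {c : ConfigData} (hc : IsConfig c) : IsConfig (r3Switch c) := by
  obtain ⟨m, h, s⟩ := c
  obtain ⟨⟨hinv, hne⟩, hh, hs⟩ := hc
  have hinv : ∀ x, m (m x) = x := hinv
  have hne : ∀ x, m x ≠ x := hne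
  have hh : ∀ x, h (m x) = ! h x := hh
  have hs : ∀ x, s (m x) = s x := hs
  refine ⟨⟨fun x => ?_, fun x hx => ?_⟩, fun x => ?_, fun x => ?_⟩
  · show switchM m (switchM m x) = x
    simp [switchM, ptFlip_flip, hinv]
  · apply hne (ptFlip x)
    have hx' : ptFlip (m (ptFlip x)) = x := hx
    have := congrArg ptFlip hx'
    rwa [ptFlip_flip] at this
  · show switchH h (switchM m x) = ! switchH h x
    simp [switchH, switchM, ptFlip_flip, hh]
  · show switchS s (switchM m x) = switchS s x
    simp [switchS, switchM, ptFlip_flip, hs]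

lemma threeSign_switch {c : ConfigData} (hc : IsConfig c) (hmat : Matched c.1 c.2.1)
    (x : Pt) :
    threeSign (r3Switch c).1 (r3Switch c).2.1 (r3Switch c).2.2 x
      = threeSign c.1 c.2.1 c.2.2 (ptFlip x) := by
  obtain ⟨m, h, s⟩ := c
  have hkey := (key m hc.1 h hc.2.1 hmat).2 (ptFlip x)
  rw [ptFlip_flip] at hkey
  show switchS s x * parity (switchM m) x * direction (switchM m) (switchH h) x = _
  rw [mul_assoc, hkey, threeSign, mul_assoc]
  rfl

lemma movable_switch {c : ConfigData} (hc : Movable c) : Movable (r3Switch c) := by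
  obtain ⟨hcfg, hmat, hsame⟩ := hc
  refine ⟨isConfig_switch hcfg, ?_, ?_⟩
  · exact (key c.1 hcfg.1 c.2.1 hcfg.2.1 hmat).1
  · intro x y
    rw [threeSign_switch hcfg hmat x, threeSign_switch hcfg hmat y]
    exact hsame _ _

/-- The R3 switch is an involution on triple configurations, and it
restricts to a bijection of the set of matched triple configurations whose three chords
all have the same 3-sign onto itself. -/
theorem r3Switch_involutive_bijOn :
    (∀ c : ConfigData, IsConfig c → IsConfig (r3Switch c)) ∧
    (∀ c : ConfigData, IsConfig c → r3Switch (r3Switch c) = c) ∧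
    Set.BijOn r3Switch {c : ConfigData | Movable c} {c : ConfigData | Movable c} := by
  refine ⟨fun c hc => isConfig_switch hc, fun c _ => r3Switch_invol c, ?_, ?_, ?_⟩
  · exact fun c hc => movable_switch hc
  · intro a _ b _ hab
    have := congrArg r3Switch hab
    rwa [r3Switch_invol a, r3Switch_invol b] at this
  · intro c hc
    exact ⟨r3Switch c, movable_switch hc, r3Switch_invol c⟩
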